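/- arXiv:1904.07095 — 10 statements merged into one kernel-verified Lean document; each statement's English description precedes it below -/
import Mathlib

section
/- The density h(x,y) = 1/(xy) is a fixed point of the transfer operator of the slow triangle map S, i.e. for all (x,y) in the triangle with 1 ≥ x ≥ y > 0, one has (1/(1+y)^3)·h(1/(1+y), x/(1+y)) + (1/(1+y)^3)·h(x/(1+y), y/(1+y)) = h(x,y). -/
theorem slowTriangle_transfer_one_div_mul {x y : ℝ} (hx : x ≠ 0) (hy : y ≠ 0)
    (hy1 : 1 + y ≠ 0) :
    1 / (1 + y) ^ 3 * (1 / (1 / (1 + y) * (x / (1 + y))))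
      + 1 / (1 + y) ^ 3 * (1 / (x / (1 + y) * (y / (1 + y)))) = 1 / (x * y) :=
  calc _ = 1 / (x * (1 + y)) + 1 / (x * y * (1 + y)) := by field_simp
    _ = 1 / (x * y) := by field_simp; ring

theorem density_fixed_point_of_transfer_operator_general
    (h : ℝ → ℝ → ℝ) (hdef : ∀ x y : ℝ, h x y = 1 / (x * y))
    (x y : ℝ) (h2 : x ≥ y) (h3 : y > 0) :
    (1 / (1 + y) ^ 3) * h (1 / (1 + y)) (x / (1 + y))
      + (1 / (1 + y) ^ 3) * h (x / (1 + y)) (y / (1 + y)) = h x y := by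
  simp only [hdef]
  exact slowTriangle_transfer_one_div_mul (by linarith) h3.ne' (by linarith)

/-- The density `h(x,y) = 1/(xy)` is a fixed point of the transfer operator of the
slow triangle map `S`. -/
theorem density_fixed_point_of_transfer_operator
    (h : ℝ → ℝ → ℝ) (hdef : ∀ x y : ℝ, h x y = 1 / (x * y))
    (x y : ℝ) (h1 : 1 ≥ x) (h2 : x ≥ y) (h3 : y > 0) :
    (1 / (1 + y) ^ 3) * h (1 / (1 + y)) (x / (1 + y))
      + (1 / (1 + y) ^ 3) * h (x / (1 + y)) (y / (1 + y)) = h x y :=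
  density_fixed_point_of_transfer_operator_general h hdef x y h2 h3
end

section
/- The triangle map T is the jump transformation of the slow map S over Γ₀: for every (x,y) ∈ △ₖ (k ≥ 0), one has T(x,y) = S^{k+1}(x,y), where the first k iterates of S applied to (x,y) lie in Γ₁ and the (k)-th iterate lies in Γ₀. -/
/-!
In homogeneous coordinates `(x : y : z)` for the point `(x/z, y/z)`, the branch of `S` on `Γ₁` is
the linear map `(x : y : z) ↦ (x : y : z - y)`. Hence for `(x, y) ∈ △ₖ` the iterates are
`S^j(x, y) = (x : y : 1 - j y)`, which stay in `Γ₁` while `x + (j + 1) y ≤ 1`, i.e. for `j < k`, and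
land in `Γ₀` for `j = k`. The `Γ₀` branch then sends `(x : y : 1 - k y)` to
`(y : 1 - x - k y : x)`, which is `T(x, y)`.
-/

/-- The partition element `△ₖ` of the triangle. -/
def triDelta (k : ℕ) : Set (ℝ × ℝ) :=
  {p : ℝ × ℝ | 1 ≥ p.1 ∧ p.1 ≥ p.2 ∧ p.2 > 0 ∧
    1 - p.1 - (k : ℝ) * p.2 ≥ 0 ∧ 1 - p.1 - ((k : ℝ) + 1) * p.2 < 0}

/-- `Γ₀ = △₀`. -/
def Gamma0 : Set (ℝ × ℝ) := {p : ℝ × ℝ | 1 ≥ p.1 ∧ p.1 ≥ p.2 ∧ p.2 > 1 - p.1}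

/-- `Γ₁`. -/
def Gamma1 : Set (ℝ × ℝ) := {p : ℝ × ℝ | 1 - p.2 ≥ p.1 ∧ p.1 ≥ p.2 ∧ p.2 ≥ 0}

/-- The slow triangle map `S`. -/
noncomputable def slowMap (p : ℝ × ℝ) : ℝ × ℝ :=
  if p.1 + p.2 > 1 then (p.2 / p.1, (1 - p.1) / p.1)
  else (p.1 / (1 - p.2), p.2 / (1 - p.2))

section Homogeneous

variable {x y c : ℝ}

theorem slowMap_div_of_add_le (hc : 0 < c) (hxy : x + y ≤ c) :
    slowMap (x / c, y / c) = (x / (c - y), y / (c - y)) := by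
  have hle : ¬ x / c + y / c > 1 := by
    rw [not_lt, ← add_div, div_le_one hc]
    exact hxy
  have hden : 1 - y / c = (c - y) / c := by field_simp
  simp only [slowMap, if_neg hle, hden, div_div_div_cancel_right₀ hc.ne']

theorem slowMap_div_of_lt_add (hc : 0 < c) (hxy : c < x + y) :
    slowMap (x / c, y / c) = (y / x, (c - x) / x) := by
  have hgt : x / c + y / c > 1 := by
    rw [← add_div, gt_iff_lt, one_lt_div hc]
    linarith
  have hnum : 1 - x / c = (c - x) / c := by field_simp
  simp only [slowMap, if_pos hgt, hnum, div_div_div_cancel_right₀ hc.ne']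

theorem div_mem_Gamma1 (hc : 0 < c) (hxy : x + y ≤ c) (hyx : y ≤ x) (hy : 0 ≤ y) :
    (x / c, y / c) ∈ Gamma1 := by
  refine ⟨?_, ?_, ?_⟩
  · rw [ge_iff_le, le_sub_iff_add_le, ← add_div, div_le_one hc]
    exact hxy
  · exact div_le_div_of_nonneg_right hyx hc.le
  · exact div_nonneg hy hc.le

theorem div_mem_Gamma0 (hc : 0 < c) (hxc : x ≤ c) (hyx : y ≤ x) (hxy : c < x + y) :
    (x / c, y / c) ∈ Gamma0 := by
  refine ⟨?_, ?_, ?_⟩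
  · rw [ge_iff_le, div_le_one hc]
    exact hxc
  · exact div_le_div_of_nonneg_right hyx hc.le
  · rw [gt_iff_lt, sub_lt_iff_lt_add, ← add_div, one_lt_div hc]
    linarith

theorem slowMap_iterate_eq_div {j : ℕ} (hx : 0 ≤ x) (hy : 0 ≤ y) (h : x + j * y ≤ 1) :
    slowMap^[j] (x, y) = (x / (1 - j * y), y / (1 - j * y)) := by
  induction j with
  | zero => simp
  | succ j ih =>
    push_cast at h ⊢
    have hj : x + j * y ≤ 1 := by linarith
    have hpos : 0 < 1 - j * y := by nlinarith [mul_nonneg j.cast_nonneg hy]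
    rw [Function.iterate_succ_apply', ih hj, slowMap_div_of_add_le hpos (by linarith)]
    ring_nf

end Homogeneous

/-- The triangle map `T` is the jump transformation of the slow map `S` over `Γ₀`:
for `(x,y) ∈ △ₖ` we have `T(x,y) = S^{k+1}(x,y)`, the iterates `S^j(x,y)` for `j < k`
lie in `Γ₁` and the `k`-th iterate lies in `Γ₀`. -/
theorem triangle_map_is_jump_transformation
    (T : ℝ × ℝ → ℝ × ℝ)
    (hT : ∀ k : ℕ, ∀ p ∈ triDelta k,
      T p = (p.2 / p.1, (1 - p.1 - (k : ℝ) * p.2) / p.1)) :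
    ∀ k : ℕ, ∀ p ∈ triDelta k,
      T p = slowMap^[k + 1] p ∧
      (∀ j : ℕ, j < k → slowMap^[j] p ∈ Gamma1) ∧
      slowMap^[k] p ∈ Gamma0 := by
  rintro k ⟨x, y⟩ hp
  have hTp := hT k _ hp
  obtain ⟨-, hyx, hy, hk, hk1⟩ : 1 ≥ x ∧ x ≥ y ∧ y > 0 ∧ 1 - x - k * y ≥ 0 ∧
    1 - x - (k + 1) * y < 0 := hp
  have hx : 0 < x := hy.trans_le hyx
  have hmono : ∀ j : ℕ, j ≤ k → x + j * y ≤ 1 := fun j hj => by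
    have : (j : ℝ) * y ≤ k * y := by gcongr
    linarith
  have hSk := slowMap_iterate_eq_div hx.le hy.le (hmono k le_rfl)
  refine ⟨?_, fun j hj => ?_, ?_⟩
  · rw [hTp, Function.iterate_succ_apply', hSk,
      slowMap_div_of_lt_add (by linarith) (by linarith)]
    ring_nf
  · have hj1 := hmono (j + 1) hj
    push_cast at hj1
    rw [slowMap_iterate_eq_div hx.le hy.le (hmono j hj.le)]
    exact div_mem_Gamma1 (by linarith) (by linarith) hyx hy.le
  · rw [hSk]
    exact div_mem_Gamma0 (by linarith) (by linarith) hyx (by linarith)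
end

section
/- For each k ≥ 1, the slow triangle map S maps △ₖ bijectively onto △_{k−1}, i.e. S(△ₖ) = △_{k−1}. -/
/-!
On the half-plane `x + y ≤ 1`, which contains every `△ₖ` with `k ≥ 1`, the slow map is the
projective map `(x, y) ↦ (x, y) / (1 - y)`, with inverse `(u, v) ↦ (u, v) / (1 + v)`. It turns
the linear form `1 - x - (c + 1) y` into `(1 - x - c y) / (1 - y)`, so it lowers by one the index
of the two inequalities that single out `△ₖ` among the triangles.
-/

noncomputable def slowMapInv (u : ℝ × ℝ) : ℝ × ℝ :=
  (u.1 / (1 + u.2), u.2 / (1 + u.2))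

lemma slowMap_of_add_le_one {p : ℝ × ℝ} (h : p.1 + p.2 ≤ 1) :
    slowMap p = (p.1 / (1 - p.2), p.2 / (1 - p.2)) :=
  if_neg h.not_gt

lemma add_le_one_of_mem_triDelta_succ {k : ℕ} {p : ℝ × ℝ} (hp : p ∈ triDelta (k + 1)) :
    p.1 + p.2 ≤ 1 := by
  obtain ⟨-, -, hy, hk, -⟩ := hp
  push_cast at hk
  nlinarith [(k.cast_nonneg : (0 : ℝ) ≤ k)]

lemma one_sub_sub_mul_div_one_sub (x y c : ℝ) (hy : 1 - y ≠ 0) :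
    1 - x / (1 - y) - c * (y / (1 - y)) = (1 - x - (c + 1) * y) / (1 - y) := by
  field_simp
  ring

lemma one_sub_sub_mul_div_one_add (x y c : ℝ) (hy : 1 + y ≠ 0) :
    1 - x / (1 + y) - (c + 1) * (y / (1 + y)) = (1 - x - c * y) / (1 + y) := by
  field_simp
  ring

lemma mapsTo_slowMap_triDelta_succ (k : ℕ) :
    Set.MapsTo slowMap (triDelta (k + 1)) (triDelta k) := by
  intro p hp
  have hsum := add_le_one_of_mem_triDelta_succ hp
  obtain ⟨-, hxy, hy, hk, hk'⟩ := hp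
  push_cast at hk hk'
  have hd : 0 < 1 - p.2 := by linarith
  rw [slowMap_of_add_le_one hsum]
  refine ⟨(div_le_one hd).mpr (by linarith), div_le_div_of_nonneg_right hxy hd.le,
    div_pos hy hd, ?_, ?_⟩
  · rw [one_sub_sub_mul_div_one_sub _ _ _ hd.ne']
    exact div_nonneg hk hd.le
  · rw [one_sub_sub_mul_div_one_sub _ _ _ hd.ne']
    exact div_neg_of_neg_of_pos hk' hd

lemma mapsTo_slowMapInv_triDelta (k : ℕ) :
    Set.MapsTo slowMapInv (triDelta k) (triDelta (k + 1)) := by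
  intro u ⟨hx, hxy, hy, hk, hk'⟩
  have hd : 0 < 1 + u.2 := by linarith
  refine ⟨(div_le_one hd).mpr (by linarith), div_le_div_of_nonneg_right hxy hd.le,
    div_pos hy hd, ?_, ?_⟩
  · simp only [slowMapInv, Nat.cast_succ]
    rw [one_sub_sub_mul_div_one_add _ _ _ hd.ne']
    exact div_nonneg hk hd.le
  · simp only [slowMapInv, Nat.cast_succ]
    rw [one_sub_sub_mul_div_one_add _ _ _ hd.ne']
    exact div_neg_of_neg_of_pos hk' hd

lemma invOn_slowMapInv_slowMap (k : ℕ) :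
    Set.InvOn slowMapInv slowMap (triDelta (k + 1)) (triDelta k) := by
  constructor
  · intro p hp
    have hsum := add_le_one_of_mem_triDelta_succ hp
    have hd : 1 - p.2 ≠ 0 := by linarith [hp.2.1, hp.2.2.1]
    rw [slowMap_of_add_le_one hsum]
    ext <;> simp only [slowMapInv] <;> field_simp <;> ring
  · intro u hu
    have hd : 1 + u.2 ≠ 0 := by linarith [hu.2.2.1]
    have hsum := add_le_one_of_mem_triDelta_succ (mapsTo_slowMapInv_triDelta k hu)
    rw [slowMap_of_add_le_one hsum]
    ext <;> simp only [slowMapInv] <;> field_simp <;> ring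

lemma bijOn_slowMap_triDelta_succ (k : ℕ) :
    Set.BijOn slowMap (triDelta (k + 1)) (triDelta k) :=
  (invOn_slowMapInv_slowMap k).bijOn (mapsTo_slowMap_triDelta_succ k)
    (mapsTo_slowMapInv_triDelta k)

/-- For each `k ≥ 1` the slow triangle map `S` maps `△ₖ` bijectively onto `△_{k-1}`. -/
theorem slowMap_maps_triDelta_bijectively :
    ∀ k : ℕ, 1 ≤ k →
      Set.InjOn slowMap (triDelta k) ∧ slowMap '' triDelta k = triDelta (k - 1) := by
  intro k hk
  obtain ⟨j, rfl⟩ := Nat.exists_eq_add_of_le' hk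
  have h := bijOn_slowMap_triDelta_succ j
  exact ⟨h.injOn, h.image_eq⟩
end

section
/- The change of coordinates Ψ(x,y) = (y/x, (1−x)/y) conjugates the slow triangle map S to the map F on the strip Σ = (0,1] × [0,∞) given by F(u,v) = (v, (1/v)(1/u − 1)) if v < 1 and F(u,v) = (u, v−1) if v ≥ 1; that is, Ψ∘S = F∘Ψ on the interior of the triangle (away from the boundary lines y = 0 and x = y). -/
/-- The map `F` on the strip `Σ = (0,1] × [0,∞)`. -/
noncomputable def stripMap (q : ℝ × ℝ) : ℝ × ℝ :=
  if q.2 < 1 then (q.2, (1 / q.2) * (1 / q.1 - 1))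
  else (q.1, q.2 - 1)

/-- The change of coordinates `Ψ(x,y) = (y/x, (1-x)/y)`. -/
noncomputable def stripCoord (p : ℝ × ℝ) : ℝ × ℝ :=
  (p.2 / p.1, (1 - p.1) / p.2)

section

variable {x y : ℝ}

theorem stripCoord_snd_lt_one_iff (hy : 0 < y) : (stripCoord (x, y)).2 < 1 ↔ 1 < x + y := by
  rw [stripCoord, div_lt_one hy]
  constructor <;> intro h <;> linarith

theorem stripCoord_slowMap_of_one_lt_add (hx : 0 < x) (hy : 0 < y) (hx1 : x < 1)
    (hxy : 1 < x + y) : stripCoord (slowMap (x, y)) = stripMap (stripCoord (x, y)) := by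
  have hv : (stripCoord (x, y)).2 < 1 := (stripCoord_snd_lt_one_iff hy).2 hxy
  have hx1' : 1 - x ≠ 0 := sub_ne_zero.2 hx1.ne'
  rw [stripMap, if_pos hv, slowMap, if_pos hxy]
  simp only [stripCoord, Prod.mk.injEq]
  constructor <;> field_simp

theorem stripCoord_slowMap_of_add_le_one (hx : 0 < x) (hy : 0 < y) (hxy : x + y ≤ 1) :
    stripCoord (slowMap (x, y)) = stripMap (stripCoord (x, y)) := by
  have hv : ¬(stripCoord (x, y)).2 < 1 := by
    rw [stripCoord_snd_lt_one_iff hy]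
    exact hxy.not_gt
  have hy1 : 1 - y ≠ 0 := by linarith
  rw [stripMap, if_neg hv, slowMap, if_neg hxy.not_gt]
  simp only [stripCoord, Prod.mk.injEq]
  constructor
  · field_simp
  · field_simp
    ring

end

/-- `Ψ` conjugates the slow triangle map `S` to the strip map `F` on the interior
of the triangle. -/
theorem strip_conjugacy :
    ∀ p : ℝ × ℝ, 1 > p.1 → p.1 > p.2 → p.2 > 0 →
      stripCoord (slowMap p) = stripMap (stripCoord p) := by
  rintro ⟨x, y⟩ (hx1 : x < 1) (hxy : y < x) (hy : 0 < y)
  have hx : 0 < x := hy.trans hxy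
  rcases lt_or_ge 1 (x + y) with h | h
  · exact stripCoord_slowMap_of_one_lt_add hx hy hx1 h
  · exact stripCoord_slowMap_of_add_le_one hx hy h
end

section
/- Let ℓ denote the ℓ¹ norm on ℝ³ and for a nonzero vector v with nonnegative components let P_v = v/‖v‖₁. Then for any nonzero v, w ∈ ℝ³ with nonnegative components, ‖v × w‖₂ ≤ √3 · ‖v‖₂ · ‖w‖₂ · ‖P_v − P_w‖₂. -/
/-! Since `v × v = 0`, writing `‖·‖₁ = ℓ`, we have `v × w = -ℓ(w) · v × (P_v - P_w)`. Lagrange's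
identity bounds `‖v × u‖₂ ≤ ‖v‖₂ ‖u‖₂`, and Cauchy–Schwarz gives `ℓ(w) ≤ √3 ‖w‖₂`. -/

/-- Euclidean norm on `ℝ³` (as `Fin 3 → ℝ`). -/
noncomputable def euclNorm3 (x : Fin 3 → ℝ) : ℝ :=
  Real.sqrt (x 0 ^ 2 + x 1 ^ 2 + x 2 ^ 2)

/-- `ℓ¹` norm on `ℝ³`. -/
def l1Norm3 (x : Fin 3 → ℝ) : ℝ := |x 0| + |x 1| + |x 2|

/-- Cross product in `ℝ³`. -/
def cross3 (v w : Fin 3 → ℝ) : Fin 3 → ℝ :=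
  ![v 1 * w 2 - v 2 * w 1, v 2 * w 0 - v 0 * w 2, v 0 * w 1 - v 1 * w 0]

open Matrix

theorem cross3_eq_crossProduct (v w : Fin 3 → ℝ) : cross3 v w = v ⨯₃ w := rfl

theorem euclNorm3_eq_sqrt_dotProduct (x : Fin 3 → ℝ) : euclNorm3 x = √(x ⬝ᵥ x) := by
  rw [euclNorm3, vec3_dotProduct]
  ring_nf

theorem euclNorm3_smul (c : ℝ) (x : Fin 3 → ℝ) : euclNorm3 (c • x) = |c| * euclNorm3 x := by
  rw [euclNorm3_eq_sqrt_dotProduct, euclNorm3_eq_sqrt_dotProduct, dotProduct_smul, smul_dotProduct,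
    smul_eq_mul, smul_eq_mul, ← mul_assoc, Real.sqrt_mul (mul_self_nonneg c),
    Real.sqrt_mul_self_eq_abs]

theorem euclNorm3_cross3_le (v w : Fin 3 → ℝ) :
    euclNorm3 (cross3 v w) ≤ euclNorm3 v * euclNorm3 w := by
  rw [euclNorm3_eq_sqrt_dotProduct, euclNorm3_eq_sqrt_dotProduct, euclNorm3_eq_sqrt_dotProduct,
    ← Real.sqrt_mul (by simpa using dotProduct_self_star_nonneg v), cross3_eq_crossProduct,
    cross_dot_cross, dotProduct_comm w v]
  exact Real.sqrt_le_sqrt (sub_le_self _ (mul_self_nonneg _))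

theorem l1Norm3_nonneg (x : Fin 3 → ℝ) : 0 ≤ l1Norm3 x := by
  unfold l1Norm3
  positivity

theorem l1Norm3_le_sqrt_three_mul_euclNorm3 (x : Fin 3 → ℝ) :
    l1Norm3 x ≤ √3 * euclNorm3 x := by
  rw [l1Norm3, euclNorm3, ← Real.sqrt_mul zero_le_three]
  apply Real.le_sqrt_of_sq_le
  have h0 := sq_abs (x 0)
  have h1 := sq_abs (x 1)
  have h2 := sq_abs (x 2)
  nlinarith [sq_nonneg (|x 0| - |x 1|), sq_nonneg (|x 1| - |x 2|), sq_nonneg (|x 0| - |x 2|)]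

theorem eq_zero_of_l1Norm3_eq_zero {x : Fin 3 → ℝ} (hx : l1Norm3 x = 0) : x = 0 := by
  unfold l1Norm3 at hx
  have h0 := abs_nonneg (x 0)
  have h1 := abs_nonneg (x 1)
  have h2 := abs_nonneg (x 2)
  ext i
  fin_cases i <;>
    exact abs_eq_zero.mp (by simp only [Fin.zero_eta, Fin.mk_one, Fin.reduceFinMk]; linarith)

theorem cross3_eq_neg_l1Norm3_smul_cross3_sub (v w : Fin 3 → ℝ) :
    cross3 v w = -l1Norm3 w • cross3 v (fun i => v i / l1Norm3 v - w i / l1Norm3 w) := by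
  obtain hw | hw := eq_or_ne (l1Norm3 w) 0
  · obtain rfl := eq_zero_of_l1Norm3_eq_zero hw
    simp [hw, cross3_eq_crossProduct]
  have hP : (fun i => v i / l1Norm3 v - w i / l1Norm3 w) =
      (l1Norm3 v)⁻¹ • v - (l1Norm3 w)⁻¹ • w := by
    ext i
    simp [div_eq_inv_mul]
  rw [hP, cross3_eq_crossProduct, cross3_eq_crossProduct, map_sub, map_smul, map_smul, cross_self,
    smul_zero, zero_sub, smul_neg, neg_smul, neg_neg, smul_smul, mul_inv_cancel₀ hw, one_smul]

theorem cross_product_estimate_general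
    (v w : Fin 3 → ℝ) :
    euclNorm3 (cross3 v w) ≤
      Real.sqrt 3 * euclNorm3 v * euclNorm3 w *
        euclNorm3 (fun i => v i / l1Norm3 v - w i / l1Norm3 w) := by
  set P := fun i => v i / l1Norm3 v - w i / l1Norm3 w
  calc euclNorm3 (cross3 v w) = l1Norm3 w * euclNorm3 (cross3 v P) := by
        rw [cross3_eq_neg_l1Norm3_smul_cross3_sub, euclNorm3_smul, abs_neg,
          abs_of_nonneg (l1Norm3_nonneg w)]
    _ ≤ √3 * euclNorm3 w * (euclNorm3 v * euclNorm3 P) := by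
        exact mul_le_mul (l1Norm3_le_sqrt_three_mul_euclNorm3 w) (euclNorm3_cross3_le v P)
          (Real.sqrt_nonneg _) (by unfold euclNorm3; positivity)
    _ = √3 * euclNorm3 v * euclNorm3 w * euclNorm3 P := by ring

/-- For nonzero vectors `v, w ∈ ℝ³` with nonnegative components,
`‖v × w‖₂ ≤ √3 ‖v‖₂ ‖w‖₂ ‖P_v - P_w‖₂` where `P_v = v / ‖v‖₁`. -/
theorem cross_product_estimate
    (v w : Fin 3 → ℝ) (hv : ∀ i, 0 ≤ v i) (hw : ∀ i, 0 ≤ w i)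
    (hv0 : v ≠ 0) (hw0 : w ≠ 0) :
    euclNorm3 (cross3 v w) ≤
      Real.sqrt 3 * euclNorm3 v * euclNorm3 w *
        euclNorm3 (fun i => v i / l1Norm3 v - w i / l1Norm3 w) :=
  cross_product_estimate_general v w
end

section
/- The mediant operation on pairs of fractions with common denominators is preserved by the maps φ₀ and φ₁: for rational pairs (p/q, r/q) and (p'/q', r'/q') in the domain of φ₀, φ₀((p/q, r/q) ⊕ (p'/q', r'/q')) = φ₀(p/q, r/q) ⊕ φ₀(p'/q', r'/q'), and similarly for φ₁. -/
/-- The local inverse `φ₀` (on rational points). -/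
def phi0 (z : ℚ × ℚ) : ℚ × ℚ := (1 / (1 + z.2), z.1 / (1 + z.2))

/-- The local inverse `φ₁` (on rational points). -/
def phi1 (z : ℚ × ℚ) : ℚ × ℚ := (z.1 / (1 + z.2), z.2 / (1 + z.2))

/-! Both maps are linear fractional, so in projective coordinates `(p : r : q)` they act
linearly; a linear map sends the sum of representatives (the mediant) to the sum of
the images. -/

theorem phi0_div_div {p r q : ℚ} (hq : q ≠ 0) :
    phi0 (p / q, r / q) = (q / (r + q), p / (r + q)) := by
  have h : 1 + r / q = (r + q) / q := by field_simp; ring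
  rw [phi0, h, one_div_div, div_div_div_cancel_right₀ hq]

theorem phi1_div_div {p r q : ℚ} (hq : q ≠ 0) :
    phi1 (p / q, r / q) = (p / (r + q), r / (r + q)) := by
  have h : 1 + r / q = (r + q) / q := by field_simp; ring
  rw [phi1, h, div_div_div_cancel_right₀ hq, div_div_div_cancel_right₀ hq]

theorem phi_preserves_mediant_general
    (p r q p' r' q' : ℤ)
    (hq : 0 < q) (hq' : 0 < q') :
    phi0 (((p + p' : ℤ) : ℚ) / ((q + q' : ℤ) : ℚ),
          ((r + r' : ℤ) : ℚ) / ((q + q' : ℤ) : ℚ)) =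
      (((q + q' : ℤ) : ℚ) / (((r + q) + (r' + q') : ℤ) : ℚ),
       ((p + p' : ℤ) : ℚ) / (((r + q) + (r' + q') : ℤ) : ℚ)) ∧
    phi1 (((p + p' : ℤ) : ℚ) / ((q + q' : ℤ) : ℚ),
          ((r + r' : ℤ) : ℚ) / ((q + q' : ℤ) : ℚ)) =
      (((p + p' : ℤ) : ℚ) / (((r + q) + (r' + q') : ℤ) : ℚ),
       ((r + r' : ℤ) : ℚ) / (((r + q) + (r' + q') : ℤ) : ℚ)) := by
  have hden : (r + q) + (r' + q') = (r + r') + (q + q') := by ring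
  have hQ : ((q + q' : ℤ) : ℚ) ≠ 0 := by exact_mod_cast (by omega : q + q' ≠ 0)
  rw [hden, Int.cast_add (r + r')]
  exact ⟨phi0_div_div hQ, phi1_div_div hQ⟩

/-- The mediant operation on pairs of fractions with common denominators is preserved
by the maps `φ₀` and `φ₁`: in projective coordinates,
`φ₀(p/q, r/q) = (q/(r+q), p/(r+q))` and `φ₁(p/q, r/q) = (p/(r+q), r/(r+q))`, and the
image of the mediant is the mediant of the images. -/
theorem phi_preserves_mediant
    (p r q p' r' q' : ℤ)
    (hq : 0 < q) (hq' : 0 < q')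
    (hr : 0 ≤ r) (hrp : r ≤ p) (hpq : p ≤ q)
    (hr' : 0 ≤ r') (hrp' : r' ≤ p') (hpq' : p' ≤ q') :
    phi0 (((p + p' : ℤ) : ℚ) / ((q + q' : ℤ) : ℚ),
          ((r + r' : ℤ) : ℚ) / ((q + q' : ℤ) : ℚ)) =
      (((q + q' : ℤ) : ℚ) / (((r + q) + (r' + q') : ℤ) : ℚ),
       ((p + p' : ℤ) : ℚ) / (((r + q) + (r' + q') : ℤ) : ℚ)) ∧
    phi1 (((p + p' : ℤ) : ℚ) / ((q + q' : ℤ) : ℚ),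
          ((r + r' : ℤ) : ℚ) / ((q + q' : ℤ) : ℚ)) =
      (((p + p' : ℤ) : ℚ) / (((r + q) + (r' + q') : ℤ) : ℚ),
       ((r + r' : ℤ) : ℚ) / (((r + q) + (r' + q') : ℤ) : ℚ)) :=
  phi_preserves_mediant_general p r q p' r' q' hq hq'
end

section
/- For all n ≥ 0, the n-th level of the counterimages tree of the modified slow triangle map satisfies #𝓑ₙ = 3·2ⁿ and #𝓘ₙ = n·2^{n−1}, where 𝓑ₙ and 𝓘ₙ are the boundary and interior points of level n; hence #𝓣ₙ = 3·2ⁿ + n·2^{n−1}. Moreover the points of 𝓑ₙ are equally distributed, 2ⁿ on each of the three sides of the triangle. -/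
/-- Interior points of the triangle `{1 ≥ x ≥ y ≥ 0}`. -/
def isInterior (z : ℚ × ℚ) : Prop := 0 < z.2 ∧ z.2 < z.1 ∧ z.1 < 1

/-- Points generated at the next level of the tree (rules R1, R2 via `φ₁`, R4). -/
def levelUp (P : Set (ℚ × ℚ)) : Set (ℚ × ℚ) :=
  phi0 '' {z ∈ P | isInterior z} ∪ phi1 '' {z ∈ P | isInterior z} ∪
  phi1 '' {z ∈ P | z.1 = z.2} ∪
  phi0 '' {z ∈ P | z.1 = 1} ∪ phi1 '' {z ∈ P | z.1 = 1}

/-- Closure of a level under the same-level rules R2 (via `φ₂ : (x,x) ↦ (x,0)`)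
and R3 (`(x,0) ↦ (1,x)`). -/
def sameLevelClosure (Q : Set (ℚ × ℚ)) : Set (ℚ × ℚ) :=
  Q ∪ (fun z : ℚ × ℚ => (z.1, (0 : ℚ))) '' {z ∈ Q | z.1 = z.2} ∪
  (fun z : ℚ × ℚ => ((1 : ℚ), z.1)) '' {z ∈ Q | z.2 = 0} ∪
  (fun z : ℚ × ℚ => ((1 : ℚ), z.1)) ''
    ((fun z : ℚ × ℚ => (z.1, (0 : ℚ))) '' {z ∈ Q | z.1 = z.2})

/-- The levels `𝓣ₙ` (for `n ≥ 0`) of the triangular tree. -/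
def treeLevel : ℕ → Set (ℚ × ℚ)
  | 0 => {(1/2, 0), (1, 1/2), (1/2, 1/2)}
  | n + 1 => sameLevelClosure (levelUp (treeLevel n))

/-!
Every level lies in the closed triangle minus its vertices, which splits into the open bottom,
right and diagonal sides and the interior. Passing to the next level, the diagonal receives `φ₁`
of the old diagonal (landing in `x < 1/2`) and `φ₀` of the old right side (landing in
`x > 1/2`); each new diagonal point `(x, x)` yields exactly one bottom point `(x, 0)` and one
right point `(1, x)`; the interior receives `φ₀` and `φ₁` of the old interior and `φ₁` of the
old right side, which land in `x + y > 1`, `x + y < 1` and `x + y = 1` respectively. All these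
maps are injective, so the numbers `d, r, i` of diagonal, right and interior points satisfy
`d' = r' = d + r` and `i' = 2 i + r`, whence `d = r = 2ⁿ` and `i = n 2ⁿ⁻¹`. Counting is done
with `Set.encard`, which is additive on disjoint unions without finiteness side conditions.
-/

def bottomSide : Set (ℚ × ℚ) := {z | z.2 = 0 ∧ 0 < z.1 ∧ z.1 < 1}

def rightSide : Set (ℚ × ℚ) := {z | z.1 = 1 ∧ 0 < z.2 ∧ z.2 < 1}

def diagonalSide : Set (ℚ × ℚ) := {z | z.1 = z.2 ∧ 0 < z.1 ∧ z.1 < 1}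

def triangleMinusVertices : Set (ℚ × ℚ) :=
  bottomSide ∪ rightSide ∪ diagonalSide ∪ {z | isInterior z}

def diagToBottom (z : ℚ × ℚ) : ℚ × ℚ := (z.1, 0)

def bottomToRight (z : ℚ × ℚ) : ℚ × ℚ := (1, z.1)

lemma disjoint_bottomSide_rightSide : Disjoint bottomSide rightSide :=
  Set.disjoint_left.2 fun _ ⟨_, _, _⟩ ⟨_, _, _⟩ => by linarith

lemma disjoint_bottomSide_diagonalSide : Disjoint bottomSide diagonalSide :=
  Set.disjoint_left.2 fun _ ⟨_, _, _⟩ ⟨_, _, _⟩ => by linarith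

lemma disjoint_rightSide_diagonalSide : Disjoint rightSide diagonalSide :=
  Set.disjoint_left.2 fun _ ⟨_, _, _⟩ ⟨_, _, _⟩ => by linarith

lemma disjoint_bottomSide_interior : Disjoint bottomSide {z | isInterior z} :=
  Set.disjoint_left.2 fun _ ⟨_, _, _⟩ ⟨_, _, _⟩ => by linarith

lemma disjoint_rightSide_interior : Disjoint rightSide {z | isInterior z} :=
  Set.disjoint_left.2 fun _ ⟨_, _, _⟩ ⟨_, _, _⟩ => by linarith

lemma disjoint_diagonalSide_interior : Disjoint diagonalSide {z | isInterior z} :=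
  Set.disjoint_left.2 fun _ ⟨_, _, _⟩ ⟨_, _, _⟩ => by linarith

lemma inter_setOf_snd_eq_zero {T : Set (ℚ × ℚ)} (hT : T ⊆ triangleMinusVertices) :
    T ∩ {z | z.2 = 0} = T ∩ bottomSide := by
  refine Set.ext fun z => and_congr_right fun hz => ⟨fun (h : z.2 = 0) => ?_, And.left⟩
  rcases hT hz with ((hb | ⟨_, _, _⟩) | ⟨_, _, _⟩) | ⟨_, _, _⟩
  all_goals first | exact hb | linarith

lemma inter_setOf_fst_eq_one {T : Set (ℚ × ℚ)} (hT : T ⊆ triangleMinusVertices) :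
    T ∩ {z | z.1 = 1} = T ∩ rightSide := by
  refine Set.ext fun z => and_congr_right fun hz => ⟨fun (h : z.1 = 1) => ?_, And.left⟩
  rcases hT hz with ((⟨_, _, _⟩ | hr) | ⟨_, _, _⟩) | ⟨_, _, _⟩
  all_goals first | exact hr | linarith

lemma inter_setOf_fst_eq_snd {T : Set (ℚ × ℚ)} (hT : T ⊆ triangleMinusVertices) :
    T ∩ {z | z.1 = z.2} = T ∩ diagonalSide := by
  refine Set.ext fun z => and_congr_right fun hz => ⟨fun (h : z.1 = z.2) => ?_, And.left⟩
  rcases hT hz with ((⟨_, _, _⟩ | ⟨_, _, _⟩) | hd) | ⟨_, _, _⟩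
  all_goals first | exact hd | linarith

lemma mapsTo_phi0_interior :
    Set.MapsTo phi0 {z | isInterior z} {z | isInterior z ∧ 1 < z.1 + z.2} := by
  rintro z ⟨h₀, h₁, h₂⟩
  have hp : (0 : ℚ) < 1 + z.2 := by linarith
  simp only [phi0, isInterior, Set.mem_ofPred_eq]
  refine ⟨⟨div_pos (h₀.trans h₁) hp, ?_, ?_⟩, ?_⟩
  · rw [div_lt_div_iff₀ hp hp]; nlinarith
  · rw [div_lt_one hp]; linarith
  · rw [← add_div, lt_div_iff₀ hp]; nlinarith

lemma mapsTo_phi1_interior :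
    Set.MapsTo phi1 {z | isInterior z} {z | isInterior z ∧ z.1 + z.2 < 1} := by
  rintro z ⟨h₀, h₁, h₂⟩
  have hp : (0 : ℚ) < 1 + z.2 := by linarith
  simp only [phi1, isInterior, Set.mem_ofPred_eq]
  refine ⟨⟨by positivity, ?_, ?_⟩, ?_⟩
  · rw [div_lt_div_iff₀ hp hp]; nlinarith
  · rw [div_lt_one hp]; linarith
  · rw [← add_div, div_lt_one hp]; nlinarith

lemma mapsTo_phi1_rightSide :
    Set.MapsTo phi1 rightSide {z | isInterior z ∧ z.1 + z.2 = 1} := by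
  rintro z ⟨h, h₀, h₁⟩
  have hp : (0 : ℚ) < 1 + z.2 := by linarith
  simp only [phi1, isInterior, Set.mem_ofPred_eq, h]
  refine ⟨⟨div_pos h₀ hp, ?_, ?_⟩, ?_⟩
  · rw [div_lt_div_iff₀ hp hp]; nlinarith
  · rw [div_lt_one hp]; linarith
  · rw [← add_div, div_eq_one_iff_eq hp.ne']

lemma mapsTo_phi1_diagonalSide :
    Set.MapsTo phi1 diagonalSide (diagonalSide ∩ {z | z.1 < 1 / 2}) := by
  rintro ⟨x, y⟩ ⟨h, h₀, h₁⟩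
  dsimp only at h h₀ h₁
  subst h
  have hp : (0 : ℚ) < 1 + x := by linarith
  refine ⟨⟨rfl, show 0 < x / (1 + x) by positivity, ?_⟩, show x / (1 + x) < 1 / 2 from ?_⟩
  · change x / (1 + x) < 1
    rw [div_lt_one hp]; linarith
  · rw [div_lt_div_iff₀ hp two_pos]; nlinarith

lemma mapsTo_phi0_rightSide :
    Set.MapsTo phi0 rightSide (diagonalSide ∩ {z | 1 / 2 < z.1}) := by
  rintro ⟨x, y⟩ ⟨h, h₀, h₁⟩
  dsimp only at h h₀ h₁
  subst h
  have hp : (0 : ℚ) < 1 + y := by linarith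
  refine ⟨⟨rfl, show 0 < 1 / (1 + y) by positivity, ?_⟩, show 1 / 2 < 1 / (1 + y) from ?_⟩
  · change 1 / (1 + y) < 1
    rw [div_lt_one hp]; linarith
  · rw [div_lt_div_iff₀ two_pos hp]; linarith

lemma mapsTo_diagToBottom : Set.MapsTo diagToBottom diagonalSide bottomSide :=
  fun _ ⟨_, h₀, h₁⟩ => ⟨rfl, h₀, h₁⟩

lemma mapsTo_bottomToRight : Set.MapsTo bottomToRight bottomSide rightSide :=
  fun _ ⟨_, h₀, h₁⟩ => ⟨rfl, h₀, h₁⟩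

lemma injOn_phi0 : Set.InjOn phi0 {z | 1 + z.2 ≠ 0} := by
  intro a ha b hb hab
  simp only [phi0, Prod.mk.injEq, one_div, inv_inj] at hab
  obtain ⟨h₂, h₁⟩ := hab
  rw [h₂, div_left_inj' hb] at h₁
  exact Prod.ext h₁ (add_left_cancel h₂)

lemma injOn_phi1 : Set.InjOn phi1 {z | 1 + z.2 ≠ 0} := by
  intro a ha b hb hab
  simp only [phi1, Prod.mk.injEq] at hab
  obtain ⟨h₁, h₂⟩ := hab
  have h₂' : a.2 = b.2 := by
    rw [div_eq_div_iff ha hb] at h₂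
    linarith
  rw [h₂', div_left_inj' hb] at h₁
  exact Prod.ext h₁ h₂'

lemma injOn_diagToBottom : Set.InjOn diagToBottom diagonalSide :=
  fun a ha b hb hab => by
    obtain ⟨h₁, -⟩ := Prod.mk.inj hab
    exact Prod.ext h₁ (by rw [← ha.1, ← hb.1, h₁])

lemma injOn_bottomToRight : Set.InjOn bottomToRight bottomSide :=
  fun a ha b hb hab => by
    obtain ⟨-, h₁⟩ := Prod.mk.inj hab
    exact Prod.ext h₁ (by rw [ha.1, hb.1])

section NextLevel

variable {T D I : Set (ℚ × ℚ)}

def diagImage (T : Set (ℚ × ℚ)) : Set (ℚ × ℚ) :=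
  phi1 '' (T ∩ diagonalSide) ∪ phi0 '' (T ∩ rightSide)

def interiorImage (T : Set (ℚ × ℚ)) : Set (ℚ × ℚ) :=
  phi0 '' (T ∩ {z | isInterior z}) ∪ phi1 '' (T ∩ {z | isInterior z}) ∪
    phi1 '' (T ∩ rightSide)

def completeWithSides (D I : Set (ℚ × ℚ)) : Set (ℚ × ℚ) :=
  D ∪ I ∪ diagToBottom '' D ∪ bottomToRight '' (diagToBottom '' D)

lemma diagImage_subset : diagImage T ⊆ diagonalSide :=
  Set.union_subset
    ((mapsTo_phi1_diagonalSide.mono_left Set.inter_subset_right).image_subset.trans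
      Set.inter_subset_left)
    ((mapsTo_phi0_rightSide.mono_left Set.inter_subset_right).image_subset.trans
      Set.inter_subset_left)

lemma interiorImage_subset : interiorImage T ⊆ {z | isInterior z} := by
  refine Set.union_subset (Set.union_subset ?_ ?_) ?_
  · exact fun _ hw => (mapsTo_phi0_interior.mono_left Set.inter_subset_right).image_subset hw |>.1
  · exact fun _ hw => (mapsTo_phi1_interior.mono_left Set.inter_subset_right).image_subset hw |>.1
  · exact fun _ hw => (mapsTo_phi1_rightSide.mono_left Set.inter_subset_right).image_subset hw |>.1

lemma levelUp_eq (hT : T ⊆ triangleMinusVertices) :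
    levelUp T = diagImage T ∪ interiorImage T := by
  simp only [levelUp, ← Set.inter_ofPred_eq_sep]
  rw [inter_setOf_fst_eq_snd hT, inter_setOf_fst_eq_one hT, diagImage, interiorImage]
  ext w
  simp only [Set.mem_union]
  tauto

lemma sameLevelClosure_union (hD : D ⊆ diagonalSide) (hI : I ⊆ {z | isInterior z}) :
    sameLevelClosure (D ∪ I) = completeWithSides D I := by
  have hdiag : {z ∈ D ∪ I | z.1 = z.2} = D := by
    refine Set.Subset.antisymm (fun z ⟨hz, h⟩ => hz.resolve_right fun hi => ?_)
      fun z hz => ⟨Or.inl hz, (hD hz).1⟩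
    exact (hI hi).2.1.ne h.symm
  have hbottom : {z ∈ D ∪ I | z.2 = 0} = ∅ := by
    refine Set.eq_empty_of_forall_notMem fun z ⟨hz, h⟩ => ?_
    rcases hz with hd | hi
    · exact (hD hd).2.1.ne' ((hD hd).1.trans h)
    · exact (hI hi).1.ne' h
  rw [sameLevelClosure, hdiag, hbottom, Set.image_empty, Set.union_empty]
  rfl

lemma treeLevel_succ_eq {n : ℕ} (hT : treeLevel n ⊆ triangleMinusVertices) :
    treeLevel (n + 1) =
      completeWithSides (diagImage (treeLevel n)) (interiorImage (treeLevel n)) := by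
  rw [treeLevel, levelUp_eq hT, sameLevelClosure_union diagImage_subset interiorImage_subset]

end NextLevel

section CompleteWithSides

variable {D I : Set (ℚ × ℚ)}

lemma diagToBottom_image_subset (hD : D ⊆ diagonalSide) : diagToBottom '' D ⊆ bottomSide :=
  (mapsTo_diagToBottom.mono_left hD).image_subset

lemma bottomToRight_image_subset (hD : D ⊆ diagonalSide) :
    bottomToRight '' (diagToBottom '' D) ⊆ rightSide :=
  (mapsTo_bottomToRight.mono_left (diagToBottom_image_subset hD)).image_subset

lemma completeWithSides_subset (hD : D ⊆ diagonalSide)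
    (hI : I ⊆ {z | isInterior z}) :
    completeWithSides D I ⊆ triangleMinusVertices := by
  rintro z (((hd | hi) | hb) | hr)
  · exact Or.inl (Or.inr (hD hd))
  · exact Or.inr (hI hi)
  · exact Or.inl (Or.inl (Or.inl (diagToBottom_image_subset hD hb)))
  · exact Or.inl (Or.inl (Or.inr (bottomToRight_image_subset hD hr)))

lemma completeWithSides_inter_diagonalSide (hD : D ⊆ diagonalSide)
    (hI : I ⊆ {z | isInterior z}) :
    completeWithSides D I ∩ diagonalSide = D := by
  have hB := diagToBottom_image_subset hD
  have hR := bottomToRight_image_subset hD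
  simp only [completeWithSides, Set.union_inter_distrib_right, Set.inter_eq_left.2 hD,
    Disjoint.inter_eq (Disjoint.mono_left hI disjoint_diagonalSide_interior.symm),
    Disjoint.inter_eq (Disjoint.mono_left hB disjoint_bottomSide_diagonalSide),
    Disjoint.inter_eq (Disjoint.mono_left hR disjoint_rightSide_diagonalSide),
    Set.union_empty]

lemma completeWithSides_inter_interior (hD : D ⊆ diagonalSide)
    (hI : I ⊆ {z | isInterior z}) :
    completeWithSides D I ∩ {z | isInterior z} = I := by
  have hB := diagToBottom_image_subset hD
  have hR := bottomToRight_image_subset hD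
  simp only [completeWithSides, Set.union_inter_distrib_right, Set.inter_eq_left.2 hI,
    Disjoint.inter_eq (Disjoint.mono_left hD disjoint_diagonalSide_interior),
    Disjoint.inter_eq (Disjoint.mono_left hB disjoint_bottomSide_interior),
    Disjoint.inter_eq (Disjoint.mono_left hR disjoint_rightSide_interior),
    Set.union_empty, Set.empty_union]

lemma completeWithSides_inter_bottomSide (hD : D ⊆ diagonalSide)
    (hI : I ⊆ {z | isInterior z}) :
    completeWithSides D I ∩ bottomSide = diagToBottom '' D := by
  have hB := diagToBottom_image_subset hD
  have hR := bottomToRight_image_subset hD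
  simp only [completeWithSides, Set.union_inter_distrib_right, Set.inter_eq_left.2 hB,
    Disjoint.inter_eq (Disjoint.mono_left hD disjoint_bottomSide_diagonalSide.symm),
    Disjoint.inter_eq (Disjoint.mono_left hI disjoint_bottomSide_interior.symm),
    Disjoint.inter_eq (Disjoint.mono_left hR disjoint_bottomSide_rightSide.symm),
    Set.union_empty, Set.empty_union]

lemma completeWithSides_inter_rightSide (hD : D ⊆ diagonalSide)
    (hI : I ⊆ {z | isInterior z}) :
    completeWithSides D I ∩ rightSide = bottomToRight '' (diagToBottom '' D) := by
  have hB := diagToBottom_image_subset hD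
  have hR := bottomToRight_image_subset hD
  simp only [completeWithSides, Set.union_inter_distrib_right, Set.inter_eq_left.2 hR,
    Disjoint.inter_eq (Disjoint.mono_left hD disjoint_rightSide_diagonalSide.symm),
    Disjoint.inter_eq (Disjoint.mono_left hI disjoint_rightSide_interior.symm),
    Disjoint.inter_eq (Disjoint.mono_left hB disjoint_bottomSide_rightSide),
    Set.empty_union]

end CompleteWithSides

lemma encard_diagImage (T : Set (ℚ × ℚ)) :
    (diagImage T).encard = (T ∩ diagonalSide).encard + (T ∩ rightSide).encard := by
  have hsep : Disjoint (phi1 '' (T ∩ diagonalSide)) (phi0 '' (T ∩ rightSide)) := by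
    refine Set.disjoint_left.2 fun w hw₁ hw₂ => ?_
    have h₁ : w.1 < 1 / 2 :=
      ((mapsTo_phi1_diagonalSide.mono_left Set.inter_subset_right).image_subset hw₁).2
    have h₂ : 1 / 2 < w.1 :=
      ((mapsTo_phi0_rightSide.mono_left Set.inter_subset_right).image_subset hw₂).2
    linarith
  have hdiag : Set.InjOn phi1 (T ∩ diagonalSide) :=
    injOn_phi1.mono fun z hz => (add_pos one_pos (hz.2.1 ▸ hz.2.2.1)).ne'
  have hright : Set.InjOn phi0 (T ∩ rightSide) :=
    injOn_phi0.mono fun z hz => (add_pos one_pos hz.2.2.1).ne'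
  rw [diagImage, Set.encard_union_eq hsep, hdiag.encard_image, hright.encard_image]

lemma encard_interiorImage (T : Set (ℚ × ℚ)) :
    (interiorImage T).encard =
      2 * (T ∩ {z | isInterior z}).encard + (T ∩ rightSide).encard := by
  set A := T ∩ {z | isInterior z}
  have hsum₀ : ∀ w ∈ phi0 '' A, 1 < w.1 + w.2 := fun w hw =>
    ((mapsTo_phi0_interior.mono_left Set.inter_subset_right).image_subset hw).2
  have hsum₁ : ∀ w ∈ phi1 '' A, w.1 + w.2 < 1 := fun w hw =>
    ((mapsTo_phi1_interior.mono_left Set.inter_subset_right).image_subset hw).2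
  have hsumr : ∀ w ∈ phi1 '' (T ∩ rightSide), w.1 + w.2 = 1 := fun w hw =>
    ((mapsTo_phi1_rightSide.mono_left Set.inter_subset_right).image_subset hw).2
  have hsep₀₁ : Disjoint (phi0 '' A) (phi1 '' A) :=
    Set.disjoint_left.2 fun w hw₀ hw₁ => by linarith [hsum₀ w hw₀, hsum₁ w hw₁]
  have hsepr : Disjoint (phi0 '' A ∪ phi1 '' A) (phi1 '' (T ∩ rightSide)) := by
    refine Set.disjoint_left.2 fun w hw hwr => ?_
    rcases hw with hw₀ | hw₁
    · linarith [hsum₀ w hw₀, hsumr w hwr]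
    · linarith [hsum₁ w hw₁, hsumr w hwr]
  have hA : A ⊆ {z | 1 + z.2 ≠ 0} := fun z hz => (add_pos one_pos hz.2.1).ne'
  have hright : Set.InjOn phi1 (T ∩ rightSide) :=
    injOn_phi1.mono fun z hz => (add_pos one_pos hz.2.2.1).ne'
  rw [interiorImage, Set.encard_union_eq hsepr, Set.encard_union_eq hsep₀₁,
    (injOn_phi0.mono hA).encard_image, (injOn_phi1.mono hA).encard_image,
    hright.encard_image, two_mul]

lemma encard_diagToBottom_image {D : Set (ℚ × ℚ)} (hD : D ⊆ diagonalSide) :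
    (diagToBottom '' D).encard = D.encard :=
  (injOn_diagToBottom.mono hD).encard_image

lemma encard_bottomToRight_image {D : Set (ℚ × ℚ)} (hD : D ⊆ diagonalSide) :
    (bottomToRight '' (diagToBottom '' D)).encard = D.encard := by
  rw [(injOn_bottomToRight.mono (diagToBottom_image_subset hD)).encard_image,
    encard_diagToBottom_image hD]

lemma treeLevel_subset_triangleMinusVertices : ∀ n, treeLevel n ⊆ triangleMinusVertices
  | 0 => by
    rintro z (rfl | rfl | rfl)
    · exact Or.inl (Or.inl (Or.inl ⟨rfl, by norm_num, by norm_num⟩))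
    · exact Or.inl (Or.inl (Or.inr ⟨rfl, by norm_num, by norm_num⟩))
    · exact Or.inl (Or.inr ⟨rfl, by norm_num, by norm_num⟩)
  | n + 1 => by
    rw [treeLevel_succ_eq (treeLevel_subset_triangleMinusVertices n)]
    exact completeWithSides_subset diagImage_subset interiorImage_subset

lemma encard_treeLevel_inter_sides : ∀ n,
    (treeLevel n ∩ bottomSide).encard = 2 ^ n ∧ (treeLevel n ∩ rightSide).encard = 2 ^ n ∧
      (treeLevel n ∩ diagonalSide).encard = 2 ^ n
  | 0 => by
    refine ⟨?_, ?_, ?_⟩ <;> norm_num [treeLevel, bottomSide, rightSide, diagonalSide,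
      Set.insert_inter_of_mem, Set.insert_inter_of_notMem]
  | n + 1 => by
    obtain ⟨-, hr, hd⟩ := encard_treeLevel_inter_sides n
    have hD : (diagImage (treeLevel n)).encard = 2 ^ (n + 1) := by
      rw [encard_diagImage, hd, hr, pow_succ, mul_two]
    rw [treeLevel_succ_eq (treeLevel_subset_triangleMinusVertices n),
      completeWithSides_inter_bottomSide diagImage_subset interiorImage_subset,
      completeWithSides_inter_rightSide diagImage_subset interiorImage_subset,
      completeWithSides_inter_diagonalSide diagImage_subset interiorImage_subset,
      encard_diagToBottom_image diagImage_subset, encard_bottomToRight_image diagImage_subset]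
    exact ⟨hD, hD, hD⟩

lemma encard_treeLevel_inter_interior :
    ∀ n, (treeLevel n ∩ {z | isInterior z}).encard = n * 2 ^ (n - 1)
  | 0 => by
    norm_num [treeLevel, isInterior, Set.insert_inter_of_mem, Set.insert_inter_of_notMem]
  | n + 1 => by
    rw [treeLevel_succ_eq (treeLevel_subset_triangleMinusVertices n),
      completeWithSides_inter_interior diagImage_subset interiorImage_subset,
      encard_interiorImage, encard_treeLevel_inter_interior n,
      (encard_treeLevel_inter_sides n).2.1]
    cases n with
    | zero => norm_num
    | succ n => push_cast; ring

lemma ncard_eq_of_encard_eq {α : Type*} {s : Set α} {k : ℕ} (h : s.encard = k) :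
    s.ncard = k := by
  rw [Set.ncard_def, h, ENat.toNat_natCast]

lemma encard_inter_boundary {T : Set (ℚ × ℚ)} (hT : T ⊆ triangleMinusVertices) :
    (T ∩ {z | z.2 = 0 ∨ z.1 = 1 ∨ z.1 = z.2}).encard =
      (T ∩ bottomSide).encard + (T ∩ rightSide).encard + (T ∩ diagonalSide).encard := by
  have hbr : Disjoint (T ∩ bottomSide) (T ∩ rightSide) :=
    disjoint_bottomSide_rightSide.mono Set.inter_subset_right Set.inter_subset_right
  have hbrd : Disjoint (T ∩ bottomSide ∪ T ∩ rightSide) (T ∩ diagonalSide) :=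
    (disjoint_bottomSide_diagonalSide.union_left disjoint_rightSide_diagonalSide).mono
      (Set.union_subset_union Set.inter_subset_right Set.inter_subset_right) Set.inter_subset_right
  rw [Set.ofPred_or, Set.ofPred_or, Set.inter_union_distrib_left, Set.inter_union_distrib_left,
    inter_setOf_snd_eq_zero hT, inter_setOf_fst_eq_one hT, inter_setOf_fst_eq_snd hT,
    ← Set.union_assoc, Set.encard_union_eq hbrd, Set.encard_union_eq hbr]

lemma encard_eq_encard_boundary_add_encard_interior {T : Set (ℚ × ℚ)}
    (hT : T ⊆ triangleMinusVertices) :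
    T.encard = (T ∩ {z | z.2 = 0 ∨ z.1 = 1 ∨ z.1 = z.2}).encard +
      (T ∩ {z | isInterior z}).encard := by
  have hsplit : T = T ∩ {z | z.2 = 0 ∨ z.1 = 1 ∨ z.1 = z.2} ∪ T ∩ {z | isInterior z} := by
    rw [← Set.inter_union_distrib_left, eq_comm, Set.inter_eq_left]
    intro z hz
    rcases hT hz with ((hb | hr) | hd) | hi
    exacts [Or.inl (Or.inl hb.1), Or.inl (Or.inr (Or.inl hr.1)), Or.inl (Or.inr (Or.inr hd.1)),
      Or.inr hi]
  have hdisj :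
      Disjoint (T ∩ {z | z.2 = 0 ∨ z.1 = 1 ∨ z.1 = z.2}) (T ∩ {z | isInterior z}) :=
    Set.disjoint_left.2 fun _ ⟨_, hb⟩ ⟨_, _, _, _⟩ => by
      rcases hb with h | h | h <;> linarith
  conv_lhs => rw [hsplit]
  exact Set.encard_union_eq hdisj

/-- Counting the points of level `n` of the tree: the boundary points number `3·2ⁿ`
(equally distributed, `2ⁿ` on each side), the interior points number `n·2^{n-1}`,
and hence `#𝓣ₙ = 3·2ⁿ + n·2^{n-1}`. -/
theorem treeLevel_card (n : ℕ) :
    (treeLevel n ∩ {z | z.2 = 0}).ncard = 2 ^ n ∧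
    (treeLevel n ∩ {z | z.1 = 1}).ncard = 2 ^ n ∧
    (treeLevel n ∩ {z | z.1 = z.2}).ncard = 2 ^ n ∧
    (treeLevel n ∩ {z | z.2 = 0 ∨ z.1 = 1 ∨ z.1 = z.2}).ncard = 3 * 2 ^ n ∧
    (treeLevel n ∩ {z | isInterior z}).ncard = n * 2 ^ (n - 1) ∧
    (treeLevel n).ncard = 3 * 2 ^ n + n * 2 ^ (n - 1) := by
  have hT := treeLevel_subset_triangleMinusVertices n
  obtain ⟨hb, hr, hd⟩ := encard_treeLevel_inter_sides n
  have hi := encard_treeLevel_inter_interior n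
  have hB : (treeLevel n ∩ {z | z.2 = 0 ∨ z.1 = 1 ∨ z.1 = z.2}).encard = 3 * 2 ^ n := by
    rw [encard_inter_boundary hT, hb, hr, hd]
    ring
  refine ⟨?_, ?_, ?_, ?_, ?_, ?_⟩ <;> apply ncard_eq_of_encard_eq <;> push_cast
  · rw [inter_setOf_snd_eq_zero hT, hb]
  · rw [inter_setOf_fst_eq_one hT, hr]
  · rw [inter_setOf_fst_eq_snd hT, hd]
  · exact hB
  · exact hi
  · rw [encard_eq_encard_boundary_add_encard_interior hT, hB, hi]
end

section
/- For all n ≥ 0, the boundary points of level n of the triangular tree are exactly 𝓑ₙ = {(p/q, p/q), (p/q, 0), (1, p/q) : p/q ∈ F^{−n}(1/2)}, where F is the Farey map on [0,1]. -/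
/-- The Farey map (restricted to rationals). -/
def farey (x : ℚ) : ℚ := if x ≤ 1/2 then x / (1 - x) else (1 - x) / x

/-! The boundary points produced at level `n + 1` are the diagonal points `φ₁(x, x)` and
`φ₀(1, x)` with `(x, x)`, `(1, x)` on the boundary of level `n`, i.e. the diagonal points over
`x / (1 + x)` and `1 / (1 + x)`, which are the two inverse branches of the Farey map; every other
rule sends a point of level `n` into the open triangle, which `φ₀` and `φ₁` preserve. Each
diagonal point `(x, x)` is then completed by the same-level rules to `(x, 0)` and `(1, x)`. -/

open Set

/-- `F⁻ⁿ(1/2)`, as a subset of `[0, 1]`. -/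
def fareyPreimage (n : ℕ) : Set ℚ := {x | 0 ≤ x ∧ x ≤ 1 ∧ farey^[n] x = 1/2}

def fareyBranches (S : Set ℚ) : Set ℚ :=
  (fun t => t / (1 + t)) '' S ∪ (fun t => 1 / (1 + t)) '' S

def diagonalPoints (S : Set ℚ) : Set (ℚ × ℚ) := (fun x => (x, x)) '' S

def boundaryPoints (S : Set ℚ) : Set (ℚ × ℚ) :=
  {z | ∃ x ∈ S, z = (x, x) ∨ z = (x, 0) ∨ z = (1, x)}

section Farey

variable {x t : ℚ}

lemma mapsTo_farey_Icc : MapsTo farey (Icc 0 1) (Icc 0 1) := by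
  rintro x ⟨h0, h1⟩
  unfold farey
  split_ifs with h
  · exact ⟨div_nonneg h0 (by linarith), (div_le_one (by linarith)).2 (by linarith)⟩
  · exact ⟨div_nonneg (by linarith) (by linarith), (div_le_one (by linarith)).2 (by linarith)⟩

lemma farey_zero : farey 0 = 0 := by norm_num [farey]

lemma farey_one : farey 1 = 0 := by norm_num [farey]

lemma eq_of_farey_eq (h : farey x = t) : x = t / (1 + t) ∨ x = 1 / (1 + t) := by
  unfold farey at h
  split_ifs at h with hx
  · left
    have : 1 - x ≠ 0 := by linarith
    subst h
    field_simp
    ring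
  · right
    have : x ≠ 0 := by linarith
    subst h
    field_simp
    ring

lemma farey_div_one_add (h0 : 0 ≤ t) (h1 : t ≤ 1) : farey (t / (1 + t)) = t := by
  have hle : t / (1 + t) ≤ 1 / 2 := by rw [div_le_div_iff₀ (by linarith) two_pos]; linarith
  rw [farey, if_pos hle]
  field_simp
  ring

lemma farey_one_div_one_add (h0 : 0 ≤ t) (h1 : t ≤ 1) : farey (1 / (1 + t)) = t := by
  rcases h1.lt_or_eq with h1 | rfl
  · have hgt : ¬ 1 / (1 + t) ≤ 1 / 2 := by
      rw [not_le, div_lt_div_iff₀ two_pos (by linarith)]; linarith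
    rw [farey, if_neg hgt]
    field_simp
    ring
  · norm_num [farey]

lemma fareyPreimage_zero : fareyPreimage 0 = {1 / 2} := by
  ext x
  simp only [fareyPreimage, Function.iterate_zero_apply, mem_ofPred_eq, mem_singleton_iff]
  constructor
  · exact fun h => h.2.2
  · rintro rfl
    norm_num

lemma mem_fareyPreimage_succ {n : ℕ} :
    x ∈ fareyPreimage (n + 1) ↔ x ∈ Icc 0 1 ∧ farey x ∈ fareyPreimage n := by
  constructor
  · rintro ⟨h0, h1, hx⟩
    obtain ⟨hf0, hf1⟩ := mapsTo_farey_Icc ⟨h0, h1⟩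
    exact ⟨⟨h0, h1⟩, hf0, hf1, hx⟩
  · rintro ⟨⟨h0, h1⟩, -, -, hx⟩
    exact ⟨h0, h1, hx⟩

lemma fareyPreimage_subset_Ioo (n : ℕ) : fareyPreimage n ⊆ Ioo 0 1 := by
  induction n with
  | zero => norm_num [fareyPreimage_zero]
  | succ n ih =>
    intro x hx
    obtain ⟨⟨h0, h1⟩, hf⟩ := mem_fareyPreimage_succ.1 hx
    have hpos := (ih hf).1
    refine ⟨h0.lt_of_ne ?_, h1.lt_of_ne ?_⟩ <;> rintro rfl <;> simp [farey_zero, farey_one] at hpos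

lemma fareyPreimage_succ (n : ℕ) : fareyPreimage (n + 1) = fareyBranches (fareyPreimage n) := by
  ext x
  constructor
  · intro hx
    obtain ⟨-, hf⟩ := mem_fareyPreimage_succ.1 hx
    rcases eq_of_farey_eq rfl with h | h
    · exact Or.inl ⟨farey x, hf, h.symm⟩
    · exact Or.inr ⟨farey x, hf, h.symm⟩
  · rintro (⟨t, ht, rfl⟩ | ⟨t, ht, rfl⟩) <;>
      obtain ⟨h0, h1⟩ := Ioo_subset_Icc_self (fareyPreimage_subset_Ioo n ht) <;>
      refine mem_fareyPreimage_succ.2 ⟨⟨by positivity, (div_le_one (by linarith)).2 (by linarith)⟩, ?_⟩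
    · rwa [farey_div_one_add h0 h1]
    · rwa [farey_one_div_one_add h0 h1]

end Farey

section Tree

variable {S : Set ℚ} {z : ℚ × ℚ}

lemma isInterior_phi0 (h : isInterior z) : isInterior (phi0 z) := by
  obtain ⟨h1, h2, h3⟩ := h
  have hc : (0 : ℚ) < 1 + z.2 := by linarith
  refine ⟨div_pos (by linarith) hc, ?_, (div_lt_one hc).2 (by linarith)⟩
  exact (div_lt_div_iff_of_pos_right hc).2 (by linarith)

lemma isInterior_phi1 (h : isInterior z) : isInterior (phi1 z) := by
  obtain ⟨h1, h2, h3⟩ := h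
  have hc : (0 : ℚ) < 1 + z.2 := by linarith
  refine ⟨div_pos h1 hc, ?_, (div_lt_one hc).2 (by linarith)⟩
  exact (div_lt_div_iff_of_pos_right hc).2 h2

lemma isInterior_phi1_mk_one {x : ℚ} (h0 : 0 < x) (h1 : x < 1) : isInterior (phi1 (1, x)) := by
  have hc : (0 : ℚ) < 1 + x := by linarith
  refine ⟨div_pos h0 hc, ?_, (div_lt_one hc).2 (by linarith)⟩
  exact (div_lt_div_iff_of_pos_right hc).2 h1

lemma exists_eq_diag_of_fst_eq_snd (hS : S ⊆ Ioo 0 1)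
    (hz : z ∈ {z | isInterior z} ∪ boundaryPoints S) (hzd : z.1 = z.2) : ∃ x ∈ S, z = (x, x) := by
  rcases hz with ⟨-, hlt, -⟩ | ⟨x, hx, rfl | rfl | rfl⟩
  · exact absurd hzd hlt.ne'
  · exact ⟨x, hx, rfl⟩
  · exact absurd hzd (hS hx).1.ne'
  · exact absurd hzd (hS hx).2.ne'

lemma exists_eq_one_of_fst_eq_one (hS : S ⊆ Ioo 0 1)
    (hz : z ∈ {z | isInterior z} ∪ boundaryPoints S) (hz1 : z.1 = 1) : ∃ x ∈ S, z = (1, x) := by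
  rcases hz with ⟨-, -, hlt⟩ | ⟨x, hx, rfl | rfl | rfl⟩
  · exact absurd hz1 hlt.ne
  · exact absurd hz1 (hS hx).2.ne
  · exact absurd hz1 (hS hx).2.ne
  · exact ⟨x, hx, rfl⟩

lemma levelUp_subset (hS : S ⊆ Ioo 0 1) {T : Set (ℚ × ℚ)}
    (hT : T ⊆ {z | isInterior z} ∪ boundaryPoints S) :
    levelUp T ⊆ {z | isInterior z} ∪ diagonalPoints (fareyBranches S) := by
  rintro w ((((⟨v, ⟨-, hv⟩, rfl⟩ | ⟨v, ⟨-, hv⟩, rfl⟩) | ⟨v, ⟨hvT, hvd⟩, rfl⟩) |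
    ⟨v, ⟨hvT, hv1⟩, rfl⟩) | ⟨v, ⟨hvT, hv1⟩, rfl⟩)
  · exact Or.inl (isInterior_phi0 hv)
  · exact Or.inl (isInterior_phi1 hv)
  · obtain ⟨x, hx, rfl⟩ := exists_eq_diag_of_fst_eq_snd hS (hT hvT) hvd
    exact Or.inr ⟨_, Or.inl ⟨x, hx, rfl⟩, rfl⟩
  · obtain ⟨x, hx, rfl⟩ := exists_eq_one_of_fst_eq_one hS (hT hvT) hv1
    exact Or.inr ⟨_, Or.inr ⟨x, hx, rfl⟩, rfl⟩
  · obtain ⟨x, hx, rfl⟩ := exists_eq_one_of_fst_eq_one hS (hT hvT) hv1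
    exact Or.inl (isInterior_phi1_mk_one (hS hx).1 (hS hx).2)

lemma diagonalPoints_fareyBranches_subset_levelUp {T : Set (ℚ × ℚ)} (hT : boundaryPoints S ⊆ T) :
    diagonalPoints (fareyBranches S) ⊆ levelUp T := by
  rintro _ ⟨_, ⟨x, hx, rfl⟩ | ⟨x, hx, rfl⟩, rfl⟩
  · exact Or.inl (Or.inl (Or.inr ⟨(x, x), ⟨hT ⟨x, hx, Or.inl rfl⟩, rfl⟩, rfl⟩))
  · exact Or.inl (Or.inr ⟨(1, x), ⟨hT ⟨x, hx, Or.inr (Or.inr rfl)⟩, rfl⟩, rfl⟩)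

lemma sameLevelClosure_subset {T : Set (ℚ × ℚ)} (hT : T ⊆ {z | isInterior z} ∪ diagonalPoints S) :
    sameLevelClosure T ⊆ {z | isInterior z} ∪ boundaryPoints S := by
  rintro w (((hw | ⟨v, ⟨hv, hvd⟩, rfl⟩) | ⟨v, ⟨hv, hv0⟩, rfl⟩) | ⟨_, ⟨v, ⟨hv, hvd⟩, rfl⟩, rfl⟩)
  · rcases hT hw with hw | ⟨x, hx, rfl⟩
    · exact Or.inl hw
    · exact Or.inr ⟨x, hx, Or.inl rfl⟩
  all_goals rcases hT hv with ⟨h0, hlt, -⟩ | ⟨x, hx, rfl⟩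
  · exact absurd hvd hlt.ne'
  · exact Or.inr ⟨x, hx, Or.inr (Or.inl rfl)⟩
  · exact absurd hv0 h0.ne'
  · exact Or.inr ⟨x, hx, Or.inr (Or.inr rfl)⟩
  · exact absurd hvd hlt.ne'
  · exact Or.inr ⟨x, hx, Or.inr (Or.inr rfl)⟩

lemma boundaryPoints_subset_sameLevelClosure {T : Set (ℚ × ℚ)} (hT : diagonalPoints S ⊆ T) :
    boundaryPoints S ⊆ sameLevelClosure T := by
  rintro _ ⟨x, hx, rfl | rfl | rfl⟩
  · exact Or.inl (Or.inl (Or.inl (hT ⟨x, hx, rfl⟩)))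
  · exact Or.inl (Or.inl (Or.inr ⟨(x, x), ⟨hT ⟨x, hx, rfl⟩, rfl⟩, rfl⟩))
  · exact Or.inr ⟨(x, 0), ⟨(x, x), ⟨hT ⟨x, hx, rfl⟩, rfl⟩, rfl⟩, rfl⟩

end Tree

lemma treeLevel_zero : treeLevel 0 = boundaryPoints (fareyPreimage 0) := by
  ext z
  simp only [treeLevel, fareyPreimage_zero, boundaryPoints, mem_insert_iff, mem_singleton_iff,
    mem_ofPred_eq, exists_eq_left]
  tauto

lemma treeLevel_subset (n : ℕ) :
    treeLevel n ⊆ {z | isInterior z} ∪ boundaryPoints (fareyPreimage n) := by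
  induction n with
  | zero => exact treeLevel_zero.trans_subset subset_union_right
  | succ n ih =>
    refine sameLevelClosure_subset ?_
    rw [fareyPreimage_succ]
    exact levelUp_subset (fareyPreimage_subset_Ioo n) ih

lemma boundaryPoints_subset_treeLevel (n : ℕ) : boundaryPoints (fareyPreimage n) ⊆ treeLevel n := by
  induction n with
  | zero => exact treeLevel_zero.symm.subset
  | succ n ih =>
    refine boundaryPoints_subset_sameLevelClosure ?_
    rw [fareyPreimage_succ]
    exact diagonalPoints_fareyBranches_subset_levelUp ih

/-- The boundary points of level `n` of the triangular tree are exactly the points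
`(p/q, p/q)`, `(p/q, 0)`, `(1, p/q)` with `p/q ∈ F⁻ⁿ(1/2)`, `F` the Farey map. -/
theorem treeLevel_boundary_eq_farey (n : ℕ) :
    {z | z ∈ treeLevel n ∧ (z.2 = 0 ∨ z.1 = 1 ∨ z.1 = z.2)} =
      {z : ℚ × ℚ | ∃ x : ℚ, 0 ≤ x ∧ x ≤ 1 ∧ farey^[n] x = 1/2 ∧
        (z = (x, x) ∨ z = (x, 0) ∨ z = (1, x))} := by
  ext z
  constructor
  · rintro ⟨hz, hbd⟩
    rcases treeLevel_subset n hz with ⟨h0, hlt, h1⟩ | ⟨x, ⟨hx0, hx1, hx⟩, hzx⟩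
    · rcases hbd with h | h | h <;> simp only [h, lt_self_iff_false] at h0 hlt h1
    · exact ⟨x, hx0, hx1, hx, hzx⟩
  · rintro ⟨x, hx0, hx1, hx, hzx⟩
    refine ⟨boundaryPoints_subset_treeLevel n ⟨x, ⟨hx0, hx1, hx⟩, hzx⟩, ?_⟩
    rcases hzx with rfl | rfl | rfl <;> simp
end

section
/- Every pair of rational numbers (x,y) ∈ ℚ² with 1 ≥ x ≥ y > 0 has a finite (terminating) triangle sequence; i.e. there exists n ≥ 1 such that Tⁿ(x,y) lies on the segment {y = 0}. -/
/-- The triangle map `T` on rational pairs: for `(x,y) ∈ △ₖ` (i.e. `k = ⌊(1-x)/y⌋`),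
`T(x,y) = (y/x, (1-x-ky)/x)`; points with `y = 0` are left fixed. -/
def triangleMap (z : ℚ × ℚ) : ℚ × ℚ :=
  if z.2 = 0 then z
  else (z.2 / z.1, (1 - z.1 - (⌊(1 - z.1) / z.2⌋ : ℚ) * z.2) / z.1)

/-!
If `c x = a` and `c y = b` are integers, then `T(x,y) = (b/a, (c - a - k b)/a)`, so `a` is a
common denominator of `T(x,y)`. Since `0 < x < 1` as long as the sequence has not stopped,
`0 < a < c`: the common denominator strictly decreases, so the sequence must terminate.
-/

section

theorem triangleMap_of_snd_ne_zero {z : ℚ × ℚ} (hz : z.2 ≠ 0) :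
    triangleMap z = (z.2 / z.1, z.2 * Int.fract ((1 - z.1) / z.2) / z.1) := by
  rw [triangleMap, if_neg hz, ← Int.self_sub_floor]
  congr 2
  field_simp

variable {x y : ℚ}

theorem triangleMap_snd_nonneg (hy : 0 < y) (hyx : y ≤ x) : 0 ≤ (triangleMap (x, y)).2 := by
  rw [triangleMap_of_snd_ne_zero hy.ne']
  have := Int.fract_nonneg ((1 - x) / y)
  have := hy.trans_le hyx
  positivity

theorem triangleMap_snd_le_fst (hy : 0 < y) (hyx : y ≤ x) :
    (triangleMap (x, y)).2 ≤ (triangleMap (x, y)).1 := by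
  rw [triangleMap_of_snd_ne_zero hy.ne']
  exact div_le_div_of_nonneg_right
    (mul_le_of_le_one_right hy.le (Int.fract_lt_one _).le) (hy.trans_le hyx).le

theorem triangleMap_fst_le_one (hy : 0 < y) (hyx : y ≤ x) : (triangleMap (x, y)).1 ≤ 1 := by
  rw [triangleMap_of_snd_ne_zero hy.ne']
  exact div_le_one_of_le₀ hyx (hy.trans_le hyx).le

theorem triangleMap_one_snd (hy : 0 < y) : (triangleMap (1, y)).2 = 0 := by
  simp [triangleMap_of_snd_ne_zero (z := (1, y)) hy.ne']

theorem triangleMap_common_denominator {c : ℕ} {a b : ℤ} (hx : (c : ℚ) * x = a)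
    (hy : (c : ℚ) * y = b) (hx0 : x ≠ 0) (hy0 : y ≠ 0) :
    (a : ℚ) * (triangleMap (x, y)).1 = b ∧
      (a : ℚ) * (triangleMap (x, y)).2 = ((c - a - ⌊(1 - x) / y⌋ * b : ℤ) : ℚ) := by
  simp only [triangleMap, if_neg hy0]
  push_cast
  rw [← hx, ← hy]
  constructor <;> field_simp

theorem exists_iterate_snd_eq_zero_of_common_denominator (c : ℕ) :
    ∀ x y : ℚ, 0 < y → y ≤ x → x ≤ 1 → 0 < c → ∀ a b : ℤ, (c : ℚ) * x = a → (c : ℚ) * y = b →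
      ∃ n : ℕ, 1 ≤ n ∧ (triangleMap^[n] (x, y)).2 = 0 := by
  induction c using Nat.strong_induction_on with
  | _ c ih =>
  intro x y hy hyx hx1 hc a b hca hcb
  by_cases hT : (triangleMap (x, y)).2 = 0
  · exact ⟨1, le_rfl, hT⟩
  have hx0 : 0 < x := hy.trans_le hyx
  have hx_lt_one : x < 1 := hx1.lt_of_ne fun h ↦ hT (h ▸ triangleMap_one_snd hy)
  have ha0 : (0 : ℚ) < a := hca ▸ by positivity
  have hac : (a : ℚ) < c := hca ▸ mul_lt_of_lt_one_right (by positivity) hx_lt_one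
  lift a to ℕ using by exact_mod_cast ha0.le
  obtain ⟨hxa, hya⟩ := triangleMap_common_denominator hca hcb hx0.ne' hy.ne'
  obtain ⟨n, -, hn⟩ := ih a (by exact_mod_cast hac) _ _
    ((triangleMap_snd_nonneg hy hyx).lt_of_ne' hT) (triangleMap_snd_le_fst hy hyx)
    (triangleMap_fst_le_one hy hyx) (by exact_mod_cast ha0) _ _ hxa hya
  exact ⟨n + 1, n.succ_pos, hn⟩

end

/-- Every rational pair `(x,y)` with `1 ≥ x ≥ y > 0` has a finite (terminating)
triangle sequence: some iterate of `T` lands on the segment `{y = 0}`. -/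
theorem rational_pair_finite_triangle_sequence
    (z : ℚ × ℚ) (h0 : 0 < z.2) (h1 : z.2 ≤ z.1) (h2 : z.1 ≤ 1) :
    ∃ n : ℕ, 1 ≤ n ∧ (triangleMap^[n] z).2 = 0 := by
  have hx : ((z.1.den * z.2.den : ℕ) : ℚ) * z.1 = (z.1.num * z.2.den : ℤ) := by
    push_cast
    rw [← Rat.mul_den_eq_num]
    ring
  have hy : ((z.1.den * z.2.den : ℕ) : ℚ) * z.2 = (z.2.num * z.1.den : ℤ) := by
    push_cast
    rw [← Rat.mul_den_eq_num z.2]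
    ring
  exact exists_iterate_snd_eq_zero_of_common_denominator _ z.1 z.2 h0 h1 h2
    (Nat.mul_pos z.1.den_pos z.2.den_pos) _ _ hx hy
end

section
/- The wandering rate of the set Γ₀ satisfies w_n(Γ₀) = Σ_{k=0}^{n−1} μ(△ₖ) = ∫₀ⁿ log(1+v)/v dv, and in particular w_n(Γ₀) ≍ log² n (i.e. the ratio w_n(Γ₀)/log²n is bounded above and below by positive constants for large n). -/
/-!
In the coordinates `u = y / x`, `v = (1 - x) / y`, with inverse
`(u, v) ↦ (1 / (1 + u v), u / (1 + u v))` of Jacobian `u / (1 + u v) ^ 3`, the union of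
the `△ₖ` with `k < n` becomes the rectangle `(0, 1] × [0, n)` and `dx dy / (x y)` becomes
`du dv / (1 + u v)`; integrating out `u` leaves `∫₀ⁿ log (1 + v) / v dv`.
The integrand lies in `[0, 1]` on `[0, 1]`, and between `log v / v` and `log (2 v) / v`
on `[1, n]`, whose primitives are `(log v) ^ 2 / 2` and `(log (2 v)) ^ 2 / 2`;
hence the integral is `(log n) ^ 2 / 2 + O(log n)`.
-/

open MeasureTheory

open Set Real Function

namespace WanderingRate

theorem measurableSet_triDelta (k : ℕ) : MeasurableSet (triDelta k) := by
  unfold triDelta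
  measurability

def triBelow (t : ℝ) : Set (ℝ × ℝ) :=
  {p | 1 ≥ p.1 ∧ p.1 ≥ p.2 ∧ p.2 > 0 ∧ 1 - p.1 - t * p.2 < 0}

theorem biUnion_range_triDelta (n : ℕ) : ⋃ k ∈ Finset.range n, triDelta k = triBelow n := by
  ext p
  simp only [mem_iUnion, Finset.mem_range, triDelta, triBelow, mem_ofPred_eq]
  constructor
  · rintro ⟨k, hk, h1, h2, h3, h4, h5⟩
    have : (k : ℝ) + 1 ≤ n := by exact_mod_cast hk
    exact ⟨h1, h2, h3, by nlinarith⟩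
  · rintro ⟨h1, h2, h3, h4⟩
    have hv : 0 ≤ (1 - p.1) / p.2 := div_nonneg (by linarith) h3.le
    refine ⟨⌊(1 - p.1) / p.2⌋₊, ?_, h1, h2, h3, ?_, ?_⟩
    · rw [Nat.floor_lt hv, div_lt_iff₀ h3]
      linarith
    · have := Nat.floor_le hv
      rw [le_div_iff₀ h3] at this
      linarith
    · have := Nat.lt_floor_add_one ((1 - p.1) / p.2)
      rw [div_lt_iff₀ h3] at this
      linarith

theorem pairwise_disjoint_triDelta : Pairwise (Disjoint on triDelta) := by
  intro i j hij
  wlog h : i < j generalizing i j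
  · exact (this hij.symm (by omega)).symm
  refine Set.disjoint_left.2 fun p ⟨_, _, hy, _, hi⟩ ⟨_, _, _, hj, _⟩ ↦ ?_
  have : (i : ℝ) + 1 ≤ j := by exact_mod_cast h
  nlinarith

noncomputable def toUV (p : ℝ × ℝ) : ℝ × ℝ := (p.2 / p.1, (1 - p.1) / p.2)

noncomputable def ofUV (q : ℝ × ℝ) : ℝ × ℝ :=
  ((1 + q.1 * q.2)⁻¹, q.1 * (1 + q.1 * q.2)⁻¹)

theorem ofUV_toUV {p : ℝ × ℝ} (h₁ : p.1 ≠ 0) (h₂ : p.2 ≠ 0) :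
    ofUV (toUV p) = p := by
  have : 1 + p.2 / p.1 * ((1 - p.1) / p.2) = p.1⁻¹ := by field_simp; ring
  simp only [ofUV, toUV, this, inv_inv]
  exact Prod.ext rfl (div_mul_cancel₀ _ h₁)

theorem toUV_ofUV {q : ℝ × ℝ} (h₁ : q.1 ≠ 0) (hg : 1 + q.1 * q.2 ≠ 0) :
    toUV (ofUV q) = q := by
  simp only [ofUV, toUV]
  ext <;> field_simp
  ring

theorem injOn_ofUV : InjOn ofUV {q : ℝ × ℝ | q.1 ≠ 0 ∧ 1 + q.1 * q.2 ≠ 0} :=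
  LeftInvOn.injOn (f₁' := toUV) fun _ hq ↦ toUV_ofUV hq.1 hq.2

theorem image_ofUV_rect (t : ℝ) : ofUV '' (Ioc 0 1 ×ˢ Ico 0 t) = triBelow t := by
  ext p
  constructor
  · rintro ⟨⟨u, v⟩, ⟨⟨hu0, hu1⟩, hv0, hvt⟩, rfl⟩
    have hg : 1 ≤ 1 + u * v := by nlinarith
    have hx : 0 < (1 + u * v)⁻¹ := by positivity
    refine ⟨inv_le_one_of_one_le₀ hg, by simpa [ofUV] using mul_le_of_le_one_left hx.le hu1,
      by simp only [ofUV]; positivity, ?_⟩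
    have : 1 - (1 + u * v)⁻¹ - t * (u * (1 + u * v)⁻¹) = u * (v - t) * (1 + u * v)⁻¹ := by
      field_simp; ring
    simp only [ofUV, this]
    exact mul_neg_of_neg_of_pos (mul_neg_of_pos_of_neg hu0 (by linarith)) hx
  · rintro ⟨h1, h2, h3, h4⟩
    have hx : 0 < p.1 := h3.trans_le h2
    refine ⟨toUV p, ⟨⟨div_pos h3 hx, div_le_one_of_le₀ h2 hx.le⟩,
      div_nonneg (by linarith) h3.le, ?_⟩, ofUV_toUV hx.ne' h3.ne'⟩
    rw [toUV, div_lt_iff₀ h3]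
    linarith

noncomputable def fderivOfUV (q : ℝ × ℝ) : ℝ × ℝ →L[ℝ] ℝ × ℝ :=
  (Matrix.toLin (.finTwoProd ℝ) (.finTwoProd ℝ)
    !![-q.2 / (1 + q.1 * q.2) ^ 2, -q.1 / (1 + q.1 * q.2) ^ 2;
      1 / (1 + q.1 * q.2) ^ 2, -q.1 ^ 2 / (1 + q.1 * q.2) ^ 2]).toContinuousLinearMap

theorem hasFDerivAt_ofUV {q : ℝ × ℝ} (hq : 1 + q.1 * q.2 ≠ 0) :
    HasFDerivAt ofUV (fderivOfUV q) q := by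
  have hg : HasFDerivAt (fun q : ℝ × ℝ ↦ (1 + q.1 * q.2)⁻¹)
      (-((1 + q.1 * q.2) ^ 2)⁻¹ • (q.1 • ContinuousLinearMap.snd ℝ ℝ ℝ +
        q.2 • ContinuousLinearMap.fst ℝ ℝ ℝ)) q :=
    (hasDerivAt_inv hq).comp_hasFDerivAt q
      ((hasFDerivAt_const 1 q).add (hasFDerivAt_fst.mul hasFDerivAt_snd) |>.congr_fderiv (by simp))
  refine (hg.prodMk (hasFDerivAt_fst.mul hg)).congr_fderiv ?_
  unfold fderivOfUV
  rw [Matrix.toLin_finTwoProd_toContinuousLinearMap]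
  ext <;> simp <;> field_simp
  ring

theorem det_fderivOfUV (q : ℝ × ℝ) : (fderivOfUV q).det = q.1 / (1 + q.1 * q.2) ^ 3 := by
  unfold fderivOfUV
  simp only [LinearMap.det_toContinuousLinearMap, LinearMap.det_toLin, Matrix.det_fin_two_of]
  rcases eq_or_ne (1 + q.1 * q.2) 0 with hg | hg
  · simp [hg]
  · set g := 1 + q.1 * q.2 with hg_def
    field_simp
    rw [hg_def]
    ring

theorem lintegral_triBelow (t : ℝ) :
    ∫⁻ p in triBelow t, ENNReal.ofReal (1 / (p.1 * p.2)) =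
      ∫⁻ q in Ioc 0 1 ×ˢ Ico 0 t, ENNReal.ofReal (1 / (1 + q.1 * q.2)) := by
  have hrect : MeasurableSet (Ioc (0 : ℝ) 1 ×ˢ Ico 0 t) :=
    measurableSet_Ioc.prod measurableSet_Ico
  have hpos : ∀ q ∈ Ioc (0 : ℝ) 1 ×ˢ Ico 0 t, 0 < q.1 ∧ 0 < 1 + q.1 * q.2 :=
    fun q ⟨⟨hu, _⟩, hv, _⟩ ↦ ⟨hu, by nlinarith⟩
  have hinj : InjOn ofUV (Ioc (0 : ℝ) 1 ×ˢ Ico 0 t) :=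
    injOn_ofUV.mono fun q hq ↦ (hpos q hq).imp LT.lt.ne' LT.lt.ne'
  rw [← image_ofUV_rect, lintegral_image_eq_lintegral_abs_det_fderiv_mul volume hrect
    (fun q hq ↦ (hasFDerivAt_ofUV (hpos q hq).2.ne').hasFDerivWithinAt) hinj]
  refine setLIntegral_congr_fun hrect fun q hq ↦ ?_
  obtain ⟨hu, hg⟩ := hpos q hq
  rw [det_fderivOfUV, abs_of_pos (by positivity), ← ENNReal.ofReal_mul (by positivity)]
  congr 1
  simp only [ofUV]
  field_simp

theorem integral_one_div_one_add_mul {v : ℝ} (hv : 0 < v) :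
    ∫ u in (0 : ℝ)..1, 1 / (1 + u * v) = log (1 + v) / v := by
  simp_rw [mul_comm _ v]
  rw [intervalIntegral.integral_comp_add_mul (f := fun x ↦ 1 / x) hv.ne', integral_one_div]
  · simp [div_eq_inv_mul]
  · rw [uIcc_of_le (by linarith)]; exact fun h ↦ by linarith [h.1]

theorem log_one_add_div_nonneg {v : ℝ} (hv : 0 ≤ v) : 0 ≤ log (1 + v) / v :=
  div_nonneg (log_nonneg (by linarith)) hv

theorem log_one_add_div_le_one {v : ℝ} (hv : 0 ≤ v) : log (1 + v) / v ≤ 1 := by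
  rcases hv.eq_or_lt with rfl | hv
  · simp
  rw [div_le_one hv]
  linarith [log_le_sub_one_of_pos (by linarith : 0 < 1 + v)]

theorem intervalIntegrable_log_one_add_div {a b : ℝ} (ha : 0 ≤ a) (hb : 0 ≤ b) :
    IntervalIntegrable (fun v ↦ log (1 + v) / v) volume a b := by
  rw [intervalIntegrable_iff]
  refine Measure.integrableOn_of_bounded (M := 1) measure_Ioc_lt_top.ne
    (by fun_prop : Measurable fun v : ℝ ↦ log (1 + v) / v).aestronglyMeasurable ?_
  filter_upwards [ae_restrict_mem measurableSet_uIoc] with v hv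
  have hv : 0 ≤ v := (le_min ha hb).trans hv.1.le
  rw [norm_of_nonneg (log_one_add_div_nonneg hv)]
  exact log_one_add_div_le_one hv

theorem lintegral_one_div_one_add_mul {v : ℝ} (hv : 0 < v) :
    ∫⁻ u in Ioc 0 1, ENNReal.ofReal (1 / (1 + u * v)) = ENNReal.ofReal (log (1 + v) / v) := by
  have hpos : ∀ u ∈ Icc (0 : ℝ) 1, 0 < 1 + u * v := fun u hu ↦ by nlinarith [hu.1]
  have hcont : ContinuousOn (fun u : ℝ ↦ 1 / (1 + u * v)) (Icc 0 1) :=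
    continuousOn_const.div (by fun_prop) fun u hu ↦ (hpos u hu).ne'
  rw [← ofReal_integral_eq_lintegral_ofReal (hcont.integrableOn_Icc.mono_set Ioc_subset_Icc_self),
    ← intervalIntegral.integral_of_le zero_le_one, integral_one_div_one_add_mul hv]
  filter_upwards [ae_restrict_mem measurableSet_Ioc] with u hu
  exact (one_div_pos.2 (hpos u (Ioc_subset_Icc_self hu))).le

theorem lintegral_one_div_one_add_mul_rect {t : ℝ} (ht : 0 ≤ t) :
    ∫⁻ q in Ioc 0 1 ×ˢ Ico 0 t, ENNReal.ofReal (1 / (1 + q.1 * q.2)) =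
      ENNReal.ofReal (∫ v in 0..t, log (1 + v) / v) := by
  rw [Measure.volume_eq_prod, setLIntegral_prod_symm _ (by fun_prop),
    Measure.restrict_congr_set Ico_ae_eq_Ioc,
    setLIntegral_congr_fun measurableSet_Ioc fun v hv ↦ lintegral_one_div_one_add_mul hv.1,
    ← ofReal_integral_eq_lintegral_ofReal, intervalIntegral.integral_of_le ht]
  · exact (intervalIntegrable_iff_integrableOn_Ioc_of_le ht).1
      (intervalIntegrable_log_one_add_div le_rfl ht)
  · filter_upwards [ae_restrict_mem measurableSet_Ioc] with v hv
    exact log_one_add_div_nonneg hv.1.le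

theorem sum_lintegral_triDelta (n : ℕ) :
    ∑ k ∈ Finset.range n, ∫⁻ p in triDelta k, ENNReal.ofReal (1 / (p.1 * p.2)) =
      ENNReal.ofReal (∫ v in (0 : ℝ)..n, log (1 + v) / v) := by
  rw [← lintegral_biUnion_finset (pairwise_disjoint_triDelta.set_pairwise _)
    (fun k _ ↦ measurableSet_triDelta k), biUnion_range_triDelta, lintegral_triBelow,
    lintegral_one_div_one_add_mul_rect n.cast_nonneg]

theorem intervalIntegrable_log_mul_div {c x : ℝ} (hc : 0 < c) (hx : 0 < x) :
    IntervalIntegrable (fun v ↦ log (c * v) / v) volume 1 x := by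
  have hpos : ∀ v ∈ uIcc 1 x, 0 < v := fun v hv ↦ lt_of_lt_of_le (lt_min one_pos hx) hv.1
  refine ContinuousOn.intervalIntegrable ?_
  exact (continuousOn_log.comp (by fun_prop) fun v hv ↦ (mul_pos hc (hpos v hv)).ne').div
    continuousOn_id fun v hv ↦ (hpos v hv).ne'

theorem integral_log_mul_div {c x : ℝ} (hc : 0 < c) (hx : 0 < x) :
    ∫ v in 1..x, log (c * v) / v = (log (c * x) ^ 2 - log c ^ 2) / 2 := by
  rw [intervalIntegral.integral_eq_sub_of_hasDerivAt (f := fun v ↦ log (c * v) ^ 2 / 2)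
    _ (intervalIntegrable_log_mul_div hc hx)]
  · simp only [mul_one]
    ring
  · intro v hv
    have hv : 0 < v := lt_of_lt_of_le (lt_min one_pos hx) hv.1
    refine ((((hasDerivAt_id' v).const_mul c).log (by positivity)).pow 2 |>.div_const 2)
      |>.congr_deriv ?_
    field_simp
    norm_num

theorem integral_log_one_add_div_zero_one_mem_Icc :
    ∫ v in 0..1, log (1 + v) / v ∈ Icc 0 1 := by
  constructor
  · exact intervalIntegral.integral_nonneg zero_le_one fun v hv ↦ log_one_add_div_nonneg hv.1
  · simpa using intervalIntegral.integral_mono_on zero_le_one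
      (intervalIntegrable_log_one_add_div le_rfl zero_le_one) intervalIntegrable_const
      fun v hv ↦ log_one_add_div_le_one hv.1

theorem integral_log_one_add_div_eq_add {x : ℝ} (hx : 0 ≤ x) :
    ∫ v in 0..x, log (1 + v) / v =
      (∫ v in 0..1, log (1 + v) / v) + ∫ v in 1..x, log (1 + v) / v :=
  (intervalIntegral.integral_add_adjacent_intervals
    (intervalIntegrable_log_one_add_div le_rfl zero_le_one)
    (intervalIntegrable_log_one_add_div zero_le_one hx)).symm

theorem log_sq_div_two_le_integral_log_one_add_div {x : ℝ} (hx : 1 ≤ x) :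
    log x ^ 2 / 2 ≤ ∫ v in 0..x, log (1 + v) / v := by
  have hx0 : 0 < x := by linarith
  calc log x ^ 2 / 2 = ∫ v in 1..x, log (1 * v) / v := by
        rw [integral_log_mul_div one_pos hx0]
        simp
    _ ≤ ∫ v in 1..x, log (1 + v) / v := by
        refine intervalIntegral.integral_mono_on hx (intervalIntegrable_log_mul_div one_pos hx0)
          (intervalIntegrable_log_one_add_div zero_le_one hx0.le) fun v hv ↦ ?_
        have hv : 0 < v := by linarith [hv.1]
        gcongr
        linarith
    _ ≤ ∫ v in 0..x, log (1 + v) / v := by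
        rw [integral_log_one_add_div_eq_add hx0.le]
        linarith [integral_log_one_add_div_zero_one_mem_Icc.1]

theorem integral_log_one_add_div_le {x : ℝ} (hx : 1 ≤ x) :
    ∫ v in 0..x, log (1 + v) / v ≤ 1 + log 2 * log x + log x ^ 2 / 2 := by
  have hx0 : 0 < x := by linarith
  calc ∫ v in 0..x, log (1 + v) / v
      = (∫ v in 0..1, log (1 + v) / v) + ∫ v in 1..x, log (1 + v) / v :=
        integral_log_one_add_div_eq_add hx0.le
    _ ≤ 1 + ∫ v in 1..x, log (2 * v) / v := by
        refine add_le_add integral_log_one_add_div_zero_one_mem_Icc.2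
          (intervalIntegral.integral_mono_on hx
            (intervalIntegrable_log_one_add_div zero_le_one hx0.le)
            (intervalIntegrable_log_mul_div two_pos hx0) fun v hv ↦ ?_)
        have hv1 : 1 ≤ v := hv.1
        have hv : 0 < v := by linarith
        gcongr
        linarith
    _ = 1 + log 2 * log x + log x ^ 2 / 2 := by
        rw [integral_log_mul_div two_pos hx0, log_mul two_ne_zero hx0.ne']
        ring

end WanderingRate

/-- The wandering rate of `Γ₀` satisfies
`wₙ(Γ₀) = Σ_{k<n} μ(△ₖ) = ∫₀ⁿ log(1+v)/v dv ≍ log² n`, where `μ` is the measure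
with density `1/(xy)`. -/
theorem wandering_rate_Gamma0 :
    (∀ n : ℕ,
      ∑ k ∈ Finset.range n,
        (∫⁻ p in triDelta k, ENNReal.ofReal (1 / (p.1 * p.2))
          ∂(volume : Measure (ℝ × ℝ))) =
      ENNReal.ofReal (∫ v in (0:ℝ)..(n:ℝ), Real.log (1 + v) / v)) ∧
    ∃ c₁ c₂ : ℝ, 0 < c₁ ∧ 0 < c₂ ∧ ∃ N : ℕ, ∀ n : ℕ, N ≤ n →
      c₁ * Real.log n ^ 2 ≤ (∫ v in (0:ℝ)..(n:ℝ), Real.log (1 + v) / v) ∧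
      (∫ v in (0:ℝ)..(n:ℝ), Real.log (1 + v) / v) ≤ c₂ * Real.log n ^ 2 := by
  refine ⟨WanderingRate.sum_lintegral_triDelta, 1 / 2, 3, by norm_num, by norm_num, 3,
    fun n hn ↦ ?_⟩
  have hn : (3 : ℝ) ≤ n := by exact_mod_cast hn
  have hlog : 1 ≤ log n := (le_log_iff_exp_le (by linarith)).2 (by linarith [exp_one_lt_d9])
  have hlower := WanderingRate.log_sq_div_two_le_integral_log_one_add_div (x := n) (by linarith)
  have hupper := WanderingRate.integral_log_one_add_div_le (x := n) (by linarith)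
  constructor
  · linarith
  · nlinarith [log_two_lt_d9]
end
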